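/- For 0 < a < 1 and real x ≠ 0 with 2x^2 ≠ a+1: C_a(x) - x = -11(x^2-1)(x^2-a)(x^2-a₁²)(x^2-a₂²)(x^2-a₃²)/(32x^3(x^2-(a+1)/2)^3), where ±a₁, ±a₂, ±a₃ are the extraneous fixed points of C_a. -/

import Mathlib

noncomputable def CaR (a : ℝ) (x : ℝ) : ℝ :=
  (42 * x ^ 10 + (-51 * (a + 1)) * x ^ 8 + (4 * (5 * a ^ 2 + 3 * a + 5)) * x ^ 6
      + (-3 * (a ^ 3 - 7 * a ^ 2 - 7 * a + 1)) * x ^ 4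
      + (-6 * a * (a ^ 2 + 3 * a + 1)) * x ^ 2 + a ^ 2 * (a + 1))
    / (8 * x ^ 3 * (2 * x ^ 2 - (a + 1)) ^ 3)

/-- The factorization of `C_a(x) - x` in terms of the extraneous fixed points
`±a₁, ±a₂, ±a₃` (i.e. `Q(x) = 22(x²-a₁²)(x²-a₂²)(x²-a₃²)`). -/
theorem stmt13 (a : ℝ) (ha0 : 0 < a) (ha1 : a < 1) (a1 a2 a3 : ℝ)
    (hfac : ∀ x : ℝ,
      22 * x ^ 6 - 23 * (a + 1) * x ^ 4 + (5 * a ^ 2 + 16 * a + 5) * x ^ 2 - a * (a + 1)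
        = 22 * (x ^ 2 - a1 ^ 2) * (x ^ 2 - a2 ^ 2) * (x ^ 2 - a3 ^ 2))
    (x : ℝ) (hx : x ≠ 0) (hx2 : 2 * x ^ 2 ≠ a + 1) :
    CaR a x - x =
      -11 * (x ^ 2 - 1) * (x ^ 2 - a) * (x ^ 2 - a1 ^ 2) * (x ^ 2 - a2 ^ 2)
          * (x ^ 2 - a3 ^ 2)
        / (32 * x ^ 3 * (x ^ 2 - (a + 1) / 2) ^ 3) := by
  have h := hfac x
  have hd : (2 : ℝ) * x ^ 2 - (a + 1) ≠ 0 := fun hc => hx2 (by linarith)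
  have hd1 : (8 : ℝ) * x ^ 3 * (2 * x ^ 2 - (a + 1)) ^ 3 ≠ 0 := by positivity
  have hd2 : (32 : ℝ) * x ^ 3 * (x ^ 2 - (a + 1) / 2) ^ 3 ≠ 0 := by
    have : x ^ 2 - (a + 1) / 2 ≠ 0 := fun hc => hx2 (by linarith)
    positivity
  rw [CaR, div_sub' hd1, div_eq_div_iff hd1 hd2]
  linear_combination (-(x ^ 2 - 1) * (x ^ 2 - a) * 4 * x ^ 3 * (2 * x ^ 2 - (a + 1)) ^ 3) * h
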